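/- arXiv:2401.02393 — 4 statements merged into one kernel-verified Lean document; each statement's English description precedes it below -/
import Mathlib

section
/- Let d, d₁, d₀ be natural numbers with d = 2·d₁ + d₀. For every real d×d matrix Λ that is skew-symmetric (Λᵀ = -Λ), there exist a natural number d₁ with 2·d₁ ≤ d, a family of reals η : Fin d₁ → ℝ with η k > 0 for every k, and a real orthogonal d×d matrix O (i.e. Oᵀ * O = 1) such that Λ = Oᵀ * Σ(η) * O, where Σ(η) is the canonical skew block matrix determined by η. -/
open Matrix

/-- The canonical skew block matrix `Σ(η)` of size `d × d` determined by `η : Fin d₁ → ℝ`: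
its only nonzero entries are `Σ(η) (2k) (2k+1) = -η k` and `Σ(η) (2k+1) (2k) = η k`
for `k < d₁` (0-based indices); all other entries (in particular the last `d - 2d₁`
rows and columns) vanish. -/
def canonicalSkew (d d₁ : ℕ) (η : Fin d₁ → ℝ) : Matrix (Fin d) (Fin d) ℝ :=
  Matrix.of fun i j =>
    if h : i.val / 2 < d₁ ∧ i.val / 2 = j.val / 2 then
      if i.val % 2 = 0 ∧ j.val % 2 = 1 then -η ⟨i.val / 2, h.1⟩
      else if i.val % 2 = 1 ∧ j.val % 2 = 0 then η ⟨i.val / 2, h.1⟩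
      else 0
    else 0

/-!
`Λᵀ * Λ = -Λ²` is symmetric, so it has an orthonormal eigenbasis; if `Λ ≠ 0` some eigenvector `v`
has eigenvalue `μ = ‖Λ v‖² > 0`. With `c = √μ` and `w = Λ v / c`, the pair `(v, w)` is orthonormal
and spans a `Λ`-invariant plane on which `Λ` acts as `!![0, -c; c, 0]`. Completing `(v, w)` to an
orthonormal basis conjugates `Λ` into `fromBlocks !![0, -c; c, 0] 0 0 C` with `C` skew of size
`d - 2`, and induction on `d` finishes.
-/

theorem canonicalSkew_zero (d : ℕ) (η : Fin 0 → ℝ) : canonicalSkew d 0 η = 0 := by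
  ext i j
  simp [canonicalSkew]

theorem canonicalSkew_cons_submatrix (m n : ℕ) (c : ℝ) (η : Fin n → ℝ) :
    (canonicalSkew (2 + m) (n + 1) (Fin.cons c η)).submatrix finSumFinEquiv finSumFinEquiv =
      fromBlocks !![0, -c; c, 0] 0 0 (canonicalSkew m n η) := by
  ext (a | a) (b | b)
  · fin_cases a <;> fin_cases b <;> simp [canonicalSkew]
  · simp [canonicalSkew]; omega
  · simp [canonicalSkew]; omega
  · simp only [canonicalSkew, submatrix_apply, finSumFinEquiv_apply_right, Fin.val_natAdd,
      of_apply, fromBlocks_apply₂₂]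
    by_cases h : a.val / 2 < n ∧ a.val / 2 = b.val / 2
    · have hk : (⟨(2 + a.val) / 2, by omega⟩ : Fin (n + 1)) = Fin.succ ⟨a.val / 2, h.1⟩ := by
        ext; simp
      rw [dif_pos (by omega), dif_pos h, Nat.add_mod_left, Nat.add_mod_left, hk, Fin.cons_succ]
    · rw [dif_neg (by omega), dif_neg h]

namespace Matrix

theorem transpose_mul_self_eq_one_iff_orthonormal {n m : Type*} [Fintype n] [DecidableEq m]
    (U : Matrix n m ℝ) : Uᵀ * U = 1 ↔ Orthonormal ℝ (fun j => WithLp.toLp 2 (Uᵀ j)) := by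
  rw [orthonormal_iff_ite, ← Matrix.ext_iff]
  simp [mul_apply, EuclideanSpace.inner_toLp_toLp, dotProduct, one_apply, mul_comm]

theorem exists_fromCols_transpose_mul_self_eq_one {n ι κ : Type*} [Fintype n] [Fintype ι]
    [Fintype κ] [DecidableEq ι] [DecidableEq κ] {U₀ : Matrix n ι ℝ} (hU₀ : U₀ᵀ * U₀ = 1)
    (hcard : Fintype.card n = Fintype.card ι + Fintype.card κ) :
    ∃ U₁ : Matrix n κ ℝ, (fromCols U₀ U₁)ᵀ * fromCols U₀ U₁ = 1 := by
  rw [transpose_mul_self_eq_one_iff_orthonormal] at hU₀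
  have hinl : Orthonormal ℝ ((Set.range (Sum.inl : ι → ι ⊕ κ)).domRestrict
      (Sum.elim (fun i => WithLp.toLp 2 (U₀ᵀ i)) 0)) := by
    convert hU₀.comp _ (Equiv.ofInjective _ Sum.inl_injective).symm.injective
    ext ⟨_, i, rfl⟩ : 1
    simp
  obtain ⟨b, hb⟩ := hinl.exists_orthonormalBasis_extension_of_card_eq (by simp [hcard])
  let U₁ : Matrix n κ ℝ := of fun k j => b (Sum.inr j) k
  have hcols : (fun j => WithLp.toLp 2 ((fromCols U₀ U₁)ᵀ j)) = ⇑b := by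
    funext j
    rcases j with j | j
    · exact (hb _ ⟨j, rfl⟩).symm
    · rfl
  refine ⟨U₁, ?_⟩
  rw [transpose_mul_self_eq_one_iff_orthonormal, hcols]
  exact b.orthonormal

section Skew

variable {n : Type*} {Λ : Matrix n n ℝ}

theorem eq_zero_of_transpose_eq_neg_of_subsingleton [Subsingleton n] (hΛ : Λᵀ = -Λ) : Λ = 0 := by
  ext i j
  have := congr_fun₂ hΛ i i
  rw [Subsingleton.elim j i]
  simp only [transpose_apply, Matrix.neg_apply] at this
  rw [Matrix.zero_apply]
  linarith

variable [Fintype n]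

theorem dotProduct_mulVec_eq_zero_of_transpose_eq_neg (hΛ : Λᵀ = -Λ) (v : n → ℝ) :
    v ⬝ᵥ Λ *ᵥ v = 0 := by
  have h : v ⬝ᵥ Λ *ᵥ v = -(v ⬝ᵥ Λ *ᵥ v) := by
    conv_lhs => rw [dotProduct_mulVec, ← transpose_transpose Λ, vecMul_transpose, hΛ, neg_mulVec,
      neg_dotProduct, dotProduct_comm]
  linarith

variable [DecidableEq n]

theorem exists_orthonormal_pair_of_transpose_eq_neg (hΛ : Λᵀ = -Λ) (h0 : Λ ≠ 0) :
    ∃ c : ℝ, 0 < c ∧ ∃ v w : n → ℝ, v ⬝ᵥ v = 1 ∧ w ⬝ᵥ w = 1 ∧ v ⬝ᵥ w = 0 ∧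
      Λ *ᵥ v = c • w ∧ Λ *ᵥ w = -c • v := by
  have hS : (Λᵀ * Λ).IsHermitian := by simpa using isHermitian_conjTranspose_mul_self Λ
  obtain ⟨i, hμ0⟩ : ∃ i, hS.eigenvalues i ≠ 0 := by
    by_contra! h
    have := hS.eigenvalues_eq_zero_iff.mp (funext h)
    rw [← conjTranspose_eq_transpose_of_trivial, conjTranspose_mul_self_eq_zero] at this
    exact h0 this
  set μ := hS.eigenvalues i
  set v : n → ℝ := ⇑(hS.eigenvectorBasis i)
  have hv : v ⬝ᵥ v = 1 := by
    have := hS.eigenvectorBasis.inner_eq_one i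
    rwa [EuclideanSpace.inner_eq_star_dotProduct, star_trivial] at this
  have hSv : (Λᵀ * Λ) *ᵥ v = μ • v := hS.mulVec_eigenvectorBasis i
  have hΛv : (Λ *ᵥ v) ⬝ᵥ (Λ *ᵥ v) = μ := by
    have : v ⬝ᵥ (Λᵀ * Λ) *ᵥ v = (Λ *ᵥ v) ⬝ᵥ (Λ *ᵥ v) := by
      rw [← mulVec_mulVec, dotProduct_mulVec, vecMul_transpose]
    rw [← this, hSv, dotProduct_smul, hv, smul_eq_mul, mul_one]
  have hμ : 0 < μ := by
    refine lt_of_le_of_ne ?_ hμ0.symm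
    rw [← hΛv]
    exact Fintype.sum_nonneg fun _ => mul_self_nonneg _
  set c := √μ
  have hc : 0 < c := Real.sqrt_pos.mpr hμ
  have hcc : c * c = μ := Real.mul_self_sqrt hμ.le
  refine ⟨c, hc, v, c⁻¹ • Λ *ᵥ v, hv, ?_, ?_, (smul_inv_smul₀ hc.ne' _).symm, ?_⟩
  · rw [smul_dotProduct, dotProduct_smul, hΛv, ← hcc, smul_eq_mul, smul_eq_mul]
    field_simp
  · rw [dotProduct_smul, dotProduct_mulVec_eq_zero_of_transpose_eq_neg hΛ, smul_zero]
  · have hΛΛ : Λ * Λ = -(Λᵀ * Λ) := by rw [hΛ, Matrix.neg_mul, neg_neg]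
    rw [mulVec_smul, mulVec_mulVec, hΛΛ, neg_mulVec, hSv, ← hcc, smul_neg, smul_smul,
      inv_mul_cancel_left₀ hc.ne', neg_smul]

theorem exists_invariant_plane_of_transpose_eq_neg (hΛ : Λᵀ = -Λ) (h0 : Λ ≠ 0) :
    ∃ c : ℝ, 0 < c ∧ ∃ U : Matrix n (Fin 2) ℝ, Uᵀ * U = 1 ∧ Λ * U = U * !![0, -c; c, 0] := by
  obtain ⟨c, hc, v, w, hvv, hww, hvw, hΛv, hΛw⟩ := exists_orthonormal_pair_of_transpose_eq_neg hΛ h0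
  refine ⟨c, hc, of fun k => ![v k, w k], ?_, ?_⟩
  · have hwv : w ⬝ᵥ v = 0 := by rwa [dotProduct_comm]
    ext a b
    fin_cases a <;> fin_cases b <;> simp [mul_apply]
    exacts [hvv, hvw, hwv, hww]
  · ext k a
    fin_cases a
    · simpa [mul_apply, Fin.sum_univ_two, mulVec, dotProduct, mul_comm] using congr_fun hΛv k
    · simpa [mul_apply, Fin.sum_univ_two, mulVec, dotProduct, mul_comm] using congr_fun hΛw k

theorem exists_conj_fromBlocks_of_transpose_eq_neg {m : Type*} [Fintype m] [DecidableEq m]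
    (hΛ : Λᵀ = -Λ) (h0 : Λ ≠ 0) (hcard : Fintype.card n = 2 + Fintype.card m) :
    ∃ c : ℝ, 0 < c ∧ ∃ (U : Matrix n (Fin 2 ⊕ m) ℝ) (C : Matrix m m ℝ), Uᵀ * U = 1 ∧ Cᵀ = -C ∧
      Λ = U * fromBlocks !![0, -c; c, 0] 0 0 C * Uᵀ := by
  obtain ⟨c, hc, U₀, hU₀, hΛU₀⟩ := exists_invariant_plane_of_transpose_eq_neg hΛ h0
  obtain ⟨U₁, hU⟩ := exists_fromCols_transpose_mul_self_eq_one hU₀ (κ := m) (by simpa using hcard)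
  set U := fromCols U₀ U₁
  have h₁₀ : U₁ᵀ * U₀ = 0 := by
    rw [transpose_fromCols, fromRows_mul_fromCols, ← fromBlocks_one] at hU
    exact (fromBlocks_inj.mp hU).2.2.1
  have hUU : U * Uᵀ = 1 := (mul_eq_one_comm_of_card_eq _ _ ℝ (by simp [hcard])).mp hU
  have hΛ₀₀ : U₀ᵀ * Λ * U₀ = !![0, -c; c, 0] := by
    rw [Matrix.mul_assoc, hΛU₀, ← Matrix.mul_assoc, hU₀, Matrix.one_mul]
  have hΛ₁₀ : U₁ᵀ * Λ * U₀ = 0 := by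
    rw [Matrix.mul_assoc, hΛU₀, ← Matrix.mul_assoc, h₁₀, Matrix.zero_mul]
  have hΛ₀₁ : U₀ᵀ * Λ * U₁ = 0 := by
    have : (U₀ᵀ * Λ * U₁)ᵀ = -(U₁ᵀ * Λ * U₀) := by simp [transpose_mul, hΛ, Matrix.mul_assoc]
    rwa [hΛ₁₀, neg_zero, transpose_eq_zero] at this
  have hN : Uᵀ * Λ * U = fromBlocks !![0, -c; c, 0] 0 0 (U₁ᵀ * Λ * U₁) := by
    rw [transpose_fromCols, fromRows_mul, fromRows_mul_fromCols, hΛ₀₀, hΛ₀₁, hΛ₁₀]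
  refine ⟨c, hc, U, U₁ᵀ * Λ * U₁, hU, ?_, ?_⟩
  · rw [transpose_mul, transpose_mul, hΛ, transpose_transpose, Matrix.neg_mul, Matrix.mul_neg,
      Matrix.mul_assoc]
  · rw [← hN, ← Matrix.mul_assoc, ← Matrix.mul_assoc, hUU, Matrix.one_mul, Matrix.mul_assoc, hUU,
      Matrix.mul_one]

end Skew

end Matrix

theorem exists_conj_canonicalSkew_cons {m n : ℕ} {c : ℝ} {η : Fin n → ℝ}
    {U : Matrix (Fin (2 + m)) (Fin 2 ⊕ Fin m) ℝ} {O : Matrix (Fin m) (Fin m) ℝ}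
    (hU : Uᵀ * U = 1) (hO : Oᵀ * O = 1) :
    ∃ W : Matrix (Fin (2 + m)) (Fin (2 + m)) ℝ, Wᵀ * W = 1 ∧
      U * fromBlocks !![0, -c; c, 0] 0 0 (Oᵀ * canonicalSkew m n η * O) * Uᵀ =
        Wᵀ * canonicalSkew (2 + m) (n + 1) (Fin.cons c η) * W := by
  set P : Matrix (Fin 2 ⊕ Fin m) (Fin 2 ⊕ Fin m) ℝ := fromBlocks 1 0 0 O
  have hUU : U * Uᵀ = 1 := (mul_eq_one_comm_of_card_eq _ _ ℝ (by simp)).mp hU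
  have hP : Pᵀ * P = 1 := by simp [P, fromBlocks_transpose, fromBlocks_multiply, hO]
  have hblocks : fromBlocks !![0, -c; c, 0] 0 0 (Oᵀ * canonicalSkew m n η * O) =
      Pᵀ * (canonicalSkew (2 + m) (n + 1) (Fin.cons c η)).submatrix finSumFinEquiv
        finSumFinEquiv * P := by
    simp [P, canonicalSkew_cons_submatrix, fromBlocks_transpose, fromBlocks_multiply]
  refine ⟨(P * Uᵀ).submatrix finSumFinEquiv.symm id, ?_, ?_⟩
  · rw [transpose_submatrix, transpose_mul, transpose_transpose, submatrix_mul_equiv,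
      submatrix_id_id, Matrix.mul_assoc, ← Matrix.mul_assoc Pᵀ, hP, Matrix.one_mul, hUU]
  · have hcanon : canonicalSkew (2 + m) (n + 1) (Fin.cons c η) =
        ((canonicalSkew (2 + m) (n + 1) (Fin.cons c η)).submatrix finSumFinEquiv
          finSumFinEquiv).submatrix finSumFinEquiv.symm finSumFinEquiv.symm := by
      simp [submatrix_submatrix]
    rw [transpose_submatrix, transpose_mul, transpose_transpose, hcanon, submatrix_mul_equiv,
      submatrix_mul_equiv, submatrix_id_id, hblocks]
    simp only [Matrix.mul_assoc]

theorem antisym_matrix_decomposition_general (d : ℕ)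
    (Λ : Matrix (Fin d) (Fin d) ℝ) (hΛ : Λᵀ = -Λ) :
    ∃ (d₁' : ℕ) (_ : 2 * d₁' ≤ d) (η : Fin d₁' → ℝ) (O : Matrix (Fin d) (Fin d) ℝ),
      (∀ k, 0 < η k) ∧ Oᵀ * O = 1 ∧ Λ = Oᵀ * canonicalSkew d d₁' η * O := by
  induction d using Nat.strong_induction_on with
  | _ d ih =>
  rcases eq_or_ne Λ 0 with rfl | h0
  · exact ⟨0, Nat.zero_le _, Fin.elim0, 1, fun k => k.elim0, by simp,
      by simp [canonicalSkew_zero]⟩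
  obtain ⟨m, rfl⟩ : ∃ m, d = 2 + m := by
    refine ⟨d - 2, (Nat.add_sub_of_le ?_).symm⟩
    by_contra! hd
    have : Subsingleton (Fin d) := Fin.subsingleton_iff_le_one.mpr (by omega)
    exact h0 (eq_zero_of_transpose_eq_neg_of_subsingleton hΛ)
  obtain ⟨c, hc, U, C, hU, hC, rfl⟩ :=
    exists_conj_fromBlocks_of_transpose_eq_neg hΛ h0 (m := Fin m) (by simp)
  obtain ⟨n, hn, η, O, hη, hO, rfl⟩ := ih m (by omega) C hC
  obtain ⟨W, hW, hconj⟩ := exists_conj_canonicalSkew_cons (c := c) (η := η) hU hO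
  exact ⟨n + 1, by omega, Fin.cons c η, W, Fin.cases hc hη, hW, hconj⟩

/-- Decomposition of an anti-symmetric real matrix: any skew-symmetric `Λ` of size `d × d`
(with `d = 2·d₁ + d₀`) can be written as `Λ = Oᵀ * Σ(η) * O` with `O` orthogonal and
`η` the positive parts of the nonzero conjugate eigenvalue pairs. -/
theorem antisym_matrix_decomposition (d d₁ d₀ : ℕ) (hd : d = 2 * d₁ + d₀)
    (Λ : Matrix (Fin d) (Fin d) ℝ) (hΛ : Λᵀ = -Λ) :
    ∃ (d₁' : ℕ) (_ : 2 * d₁' ≤ d) (η : Fin d₁' → ℝ) (O : Matrix (Fin d) (Fin d) ℝ),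
      (∀ k, 0 < η k) ∧ Oᵀ * O = 1 ∧ Λ = Oᵀ * canonicalSkew d d₁' η * O :=
  antisym_matrix_decomposition_general d Λ hΛ
end

section
/- Let d₁, d₀ be natural numbers, d = 2·d₁ + d₀, η : Fin d₁ → ℝ, O a real orthogonal d×d matrix (Oᵀ * O = 1), and Λ = Oᵀ * Σ(η) * O. Then for every vector w : Fin d → ℝ one has w ⬝ᵥ ((Λ * Λᵀ).mulVec w) = ∑_{k < d₁} (η k)² · ( ((O.mulVec w) (2k))² + ((O.mulVec w) (2k+1))² ). -/
open Matrix

/-- For `d = 2·d₁ + d₀` and `k : Fin d₁`, the index `2k` viewed in `Fin d`. -/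
def idx0 {d₁ d₀ : ℕ} (k : Fin d₁) : Fin (2 * d₁ + d₀) :=
  ⟨2 * k.val, by have := k.isLt; omega⟩

/-- For `d = 2·d₁ + d₀` and `k : Fin d₁`, the index `2k+1` viewed in `Fin d`. -/
def idx1 {d₁ d₀ : ℕ} (k : Fin d₁) : Fin (2 * d₁ + d₀) :=
  ⟨2 * k.val + 1, by have := k.isLt; omega⟩

/-!
Since `Λ Λᵀ = Oᵀ Σ Σᵀ O`, the form equals `‖(O w) ᵥ* Σ‖²`, the orthogonal factor dropping out.
Each `2 × 2` block of `Σ(η)` is `η k` times a quarter turn, so `(O w) ᵥ* Σ` swaps the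
coordinates `2k`, `2k+1` of `O w` (one with a sign), scales them by `η k`, and kills the
last `d₀` coordinates.
-/

section Orthogonal

variable {n R : Type*} [Fintype n] [CommSemiring R]

theorem Matrix.dotProduct_mul_transpose_mulVec (A : Matrix n n R) (w : n → R) :
    w ⬝ᵥ (A * Aᵀ) *ᵥ w = (w ᵥ* A) ⬝ᵥ (w ᵥ* A) := by
  rw [← mulVec_mulVec, dotProduct_mulVec, mulVec_transpose]

theorem Matrix.vecMul_dotProduct_vecMul_self_of_mul_transpose_eq_one [DecidableEq n]
    {O : Matrix n n R} (hO : O * Oᵀ = 1) (x : n → R) :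
    (x ᵥ* O) ⬝ᵥ (x ᵥ* O) = x ⬝ᵥ x := by
  rw [← dotProduct_mulVec, ← vecMul_transpose, vecMul_vecMul, hO, vecMul_one]

end Orthogonal

theorem Fin.sum_univ_two_mul_add {M : Type*} [AddCommMonoid M] {d₁ d₀ : ℕ}
    (f : Fin (2 * d₁ + d₀) → M) :
    ∑ i, f i = ∑ k : Fin d₁, (f (idx0 k) + f (idx1 k)) + ∑ j : Fin d₀, f (Fin.natAdd _ j) := by
  rw [Fin.sum_univ_add]
  congr 1
  let e : Fin d₁ × Fin 2 ≃ Fin (2 * d₁) := finProdFinEquiv.trans (finCongr (mul_comm d₁ 2))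
  rw [← e.sum_comp, Fintype.sum_prod_type]
  refine Finset.sum_congr rfl fun k _ => ?_
  rw [Fin.sum_univ_two]
  congr 2 <;> ext <;> simp [e, idx0, idx1, add_comm, mul_comm]

section canonicalSkew

variable {d₁ d₀ : ℕ} (η : Fin d₁ → ℝ)

theorem canonicalSkew_apply_idx0 (k : Fin d₁) (i : Fin (2 * d₁ + d₀)) :
    canonicalSkew (2 * d₁ + d₀) d₁ η i (idx0 k) = if i = idx1 k then η k else 0 := by
  simp only [canonicalSkew, of_apply, idx0, idx1, Fin.ext_iff]
  split_ifs <;> first | rfl | omega | (congr 1; ext; simp only; omega)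

theorem canonicalSkew_apply_idx1 (k : Fin d₁) (i : Fin (2 * d₁ + d₀)) :
    canonicalSkew (2 * d₁ + d₀) d₁ η i (idx1 k) = if i = idx0 k then -η k else 0 := by
  simp only [canonicalSkew, of_apply, idx0, idx1, Fin.ext_iff]
  split_ifs <;> first | rfl | omega | (congr 2; ext; simp only; omega)

theorem canonicalSkew_apply_natAdd (j : Fin d₀) (i : Fin (2 * d₁ + d₀)) :
    canonicalSkew (2 * d₁ + d₀) d₁ η i (Fin.natAdd _ j) = 0 := by
  simp only [canonicalSkew, of_apply, Fin.natAdd]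
  split_ifs <;> first | rfl | omega

theorem vecMul_canonicalSkew_dotProduct_self (v : Fin (2 * d₁ + d₀) → ℝ) :
    (v ᵥ* canonicalSkew (2 * d₁ + d₀) d₁ η) ⬝ᵥ (v ᵥ* canonicalSkew (2 * d₁ + d₀) d₁ η) =
      ∑ k : Fin d₁, η k ^ 2 * (v (idx0 k) ^ 2 + v (idx1 k) ^ 2) := by
  set u := v ᵥ* canonicalSkew (2 * d₁ + d₀) d₁ η
  have hu0 (k : Fin d₁) : u (idx0 k) = η k * v (idx1 k) := by
    simp [u, vecMul, dotProduct, canonicalSkew_apply_idx0, mul_comm]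
  have hu1 (k : Fin d₁) : u (idx1 k) = -(η k * v (idx0 k)) := by
    simp [u, vecMul, dotProduct, canonicalSkew_apply_idx1, mul_comm]
  have hu_natAdd (j : Fin d₀) : u (Fin.natAdd _ j) = 0 := by
    simp [u, vecMul, dotProduct, canonicalSkew_apply_natAdd]
  rw [dotProduct, Fin.sum_univ_two_mul_add]
  simp only [hu0, hu1, hu_natAdd, mul_zero, Finset.sum_const_zero, add_zero]
  exact Finset.sum_congr rfl fun k _ => by ring

end canonicalSkew

/-- For `Λ = Oᵀ Σ(η) O` with `O` orthogonal, the quadratic form `wᵀ Λ Λᵀ w` equals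
`∑_{k<d₁} η_k² ((Ow)_{2k}² + (Ow)_{2k+1}²)`. -/
theorem quadratic_form_LambdaLambdaT (d₁ d₀ : ℕ) (η : Fin d₁ → ℝ)
    (O : Matrix (Fin (2 * d₁ + d₀)) (Fin (2 * d₁ + d₀)) ℝ) (hO : Oᵀ * O = 1)
    (Λ : Matrix (Fin (2 * d₁ + d₀)) (Fin (2 * d₁ + d₀)) ℝ)
    (hΛ : Λ = Oᵀ * canonicalSkew (2 * d₁ + d₀) d₁ η * O)
    (w : Fin (2 * d₁ + d₀) → ℝ) :
    w ⬝ᵥ ((Λ * Λᵀ).mulVec w) =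
      ∑ k : Fin d₁, (η k) ^ 2 *
        ((O.mulVec w (idx0 k)) ^ 2 + (O.mulVec w (idx1 k)) ^ 2) := by
  have hwΛ : w ᵥ* Λ = ((O *ᵥ w) ᵥ* canonicalSkew (2 * d₁ + d₀) d₁ η) ᵥ* O := by
    rw [hΛ, ← vecMul_vecMul, ← vecMul_vecMul, vecMul_transpose]
  rw [dotProduct_mul_transpose_mulVec, hwΛ,
    vecMul_dotProduct_vecMul_self_of_mul_transpose_eq_one (mul_eq_one_comm.mp hO)]
  exact vecMul_canonicalSkew_dotProduct_self η (O *ᵥ w)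
end

section
/- Let d₁, d₀ be natural numbers, d = 2·d₁ + d₀, η : Fin d₁ → ℝ, O a real orthogonal d×d matrix (Oᵀ * O = 1), and Λ = Oᵀ * Σ(η) * O. Let h : Fin d → ℝ satisfy h (2k) = h (2k+1) for all k < d₁, and define 𝓛 : (Fin d → ℝ) → ℝ by 𝓛(w) = exp( ∑_{i} h i · ((O.mulVec w) i)² ). Then for every w : Fin d → ℝ, ∑_{j} ((Λᵀ.mulVec w) j) · ∂𝓛/∂wⱼ (w) = 0, where ∂𝓛/∂wⱼ (w) denotes the derivative of the function s ↦ 𝓛(Function.update w j s) at s = w j. -/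
open Matrix

theorem canonicalSkew_transpose {d d₁ : ℕ} (η : Fin d₁ → ℝ) :
    (canonicalSkew d d₁ η)ᵀ = -canonicalSkew d d₁ η := by
  ext i j
  rw [transpose_apply, neg_apply]
  simp only [canonicalSkew, of_apply]
  have hsymm : (j.val / 2 < d₁ ∧ j.val / 2 = i.val / 2) ↔
      (i.val / 2 < d₁ ∧ i.val / 2 = j.val / 2) := by omega
  by_cases hji : j.val / 2 < d₁ ∧ j.val / 2 = i.val / 2
  · have hij := hsymm.mp hji
    have hη : η ⟨j.val / 2, hji.1⟩ = η ⟨i.val / 2, hij.1⟩ := by simp only [hji.2]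
    rw [dif_pos hji, dif_pos hij, hη]
    split_ifs <;> first | (exfalso; omega) | ring
  · rw [dif_neg hji, dif_neg (hsymm.not.mp hji), neg_zero]

theorem commute_diagonal_canonicalSkew {d d₁ : ℕ} (η : Fin d₁ → ℝ) {h : Fin d → ℝ}
    (hh : ∀ i j : Fin d, i.val / 2 < d₁ → i.val / 2 = j.val / 2 → h i = h j) :
    Commute (diagonal h) (canonicalSkew d d₁ η) := by
  ext i j
  rw [diagonal_mul, mul_diagonal]
  by_cases hij : i.val / 2 < d₁ ∧ i.val / 2 = j.val / 2
  · rw [hh i j hij.1 hij.2, mul_comm]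
  · simp only [canonicalSkew, of_apply, dif_neg hij, mul_zero, zero_mul]

theorem apply_eq_apply_of_div_two_eq {d₁ d₀ : ℕ} {h : Fin (2 * d₁ + d₀) → ℝ}
    (hpair : ∀ k : Fin d₁, h (idx0 k) = h (idx1 k)) (i j : Fin (2 * d₁ + d₀))
    (hi : i.val / 2 < d₁) (hij : i.val / 2 = j.val / 2) : h i = h j := by
  have key (l : Fin (2 * d₁ + d₀)) (hl : l.val / 2 < d₁) : h l = h (idx0 ⟨l.val / 2, hl⟩) := by
    rcases Nat.mod_two_eq_zero_or_one l.val with hev | hodd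
    · congr 1; ext; simp only [idx0]; omega
    · rw [hpair]; congr 1; ext; simp only [idx1]; omega
  rw [key i hi, key j (hij ▸ hi)]
  simp only [hij]

section SkewSymmetric

variable {n R : Type*} [Fintype n] [CommRing R]

theorem Matrix.dotProduct_mulVec_self_eq_zero_of_transpose_eq_neg [IsAddTorsionFree R]
    {A : Matrix n n R} (hA : Aᵀ = -A) (u : n → R) : u ⬝ᵥ A *ᵥ u = 0 := by
  refine self_eq_neg.mp ?_
  conv_lhs =>
    rw [dotProduct_mulVec, ← mulVec_transpose, hA, dotProduct_comm, neg_mulVec, dotProduct_neg]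

theorem sum_mul_mul_transpose_mulVec_eq_zero_of_commute_diagonal [IsAddTorsionFree R]
    [DecidableEq n] {A : Matrix n n R} (hA : Aᵀ = -A) {h : n → R}
    (hcomm : Commute (diagonal h) A) (u : n → R) : ∑ i, h i * u i * (Aᵀ *ᵥ u) i = 0 := by
  have hskew : (diagonal h * Aᵀ)ᵀ = -(diagonal h * Aᵀ) := by
    rw [transpose_mul, transpose_transpose, diagonal_transpose, ← hcomm.eq, hA, mul_neg, neg_neg]
  calc ∑ i, h i * u i * (Aᵀ *ᵥ u) i = u ⬝ᵥ (diagonal h * Aᵀ) *ᵥ u := by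
        simp [dotProduct, ← mulVec_mulVec, mulVec_diagonal, mul_assoc, mul_left_comm]
    _ = 0 := dotProduct_mulVec_self_eq_zero_of_transpose_eq_neg hskew u

theorem mulVec_transpose_conj_mulVec [DecidableEq n] {O : Matrix n n R} (hO : O * Oᵀ = 1)
    (A : Matrix n n R) (w : n → R) : O *ᵥ ((Oᵀ * A * O)ᵀ *ᵥ w) = Aᵀ *ᵥ (O *ᵥ w) := by
  simp [transpose_mul, mulVec_mulVec, ← Matrix.mul_assoc, hO]

end SkewSymmetric

theorem hasFDerivAt_sum_mul_mulVec_sq {m n : Type*} [Fintype m] [Fintype n] (h : m → ℝ)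
    (O : Matrix m n ℝ) (w : n → ℝ) :
    HasFDerivAt (fun w : n → ℝ => ∑ i, h i * (O *ᵥ w) i ^ 2)
      ((2 : ℝ) • ∑ i, (h i * (O *ᵥ w) i) •
        (ContinuousLinearMap.proj i).comp O.mulVecLin.toContinuousLinearMap) w := by
  have hO : HasFDerivAt (fun w : n → ℝ => O *ᵥ w) O.mulVecLin.toContinuousLinearMap w :=
    O.mulVecLin.toContinuousLinearMap.hasFDerivAt
  refine (HasFDerivAt.fun_sum (u := Finset.univ) fun i _ =>
    (((hasFDerivAt_apply i (O *ᵥ w)).comp w hO).pow 2).const_mul (h i)).congr_fderiv ?_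
  rw [Finset.smul_sum]
  refine Finset.sum_congr rfl fun i _ => ?_
  simp only [smul_smul]
  congr 1
  ring

theorem sum_mul_deriv_update_eq_fderiv {ι 𝕜 : Type*} [Fintype ι] [DecidableEq ι]
    [NontriviallyNormedField 𝕜] {F : (ι → 𝕜) → 𝕜} {w : ι → 𝕜} (hF : DifferentiableAt 𝕜 F w)
    (v : ι → 𝕜) :
    ∑ j, v j * deriv (fun s => F (Function.update w j s)) (w j) = fderiv 𝕜 F w v := by
  have hpartial (j : ι) :
      deriv (fun s => F (Function.update w j s)) (w j) = fderiv 𝕜 F w (Pi.single j 1) := by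
    rw [← Function.update_eq_self j w] at hF
    have := (hF.hasFDerivAt.comp_hasDerivAt (w j) (hasDerivAt_update w j (w j))).deriv
    rwa [Function.update_eq_self] at this
  conv_rhs => rw [← Finset.univ_sum_single v]
  simp only [hpartial, map_sum]
  refine Finset.sum_congr rfl fun j _ => ?_
  rw [← smul_eq_mul, ← map_smul, ← Pi.single_smul', smul_eq_mul, mul_one]

/-- With `Λ = OᵀΣ(η)O`, `h` constant on the 2×2 blocks, and the exponential-quadratic
ansatz `𝓛(w) = exp(∑ᵢ hᵢ (Ow)ᵢ²)`, the drift term `∑ⱼ (wᵀΛ)ⱼ ∂𝓛/∂wⱼ` vanishes. -/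
theorem drift_term_vanishes (d₁ d₀ : ℕ) (η : Fin d₁ → ℝ)
    (O : Matrix (Fin (2 * d₁ + d₀)) (Fin (2 * d₁ + d₀)) ℝ) (hO : Oᵀ * O = 1)
    (Λ : Matrix (Fin (2 * d₁ + d₀)) (Fin (2 * d₁ + d₀)) ℝ)
    (hΛ : Λ = Oᵀ * canonicalSkew (2 * d₁ + d₀) d₁ η * O)
    (h : Fin (2 * d₁ + d₀) → ℝ)
    (hpair : ∀ k : Fin d₁, h (idx0 k) = h (idx1 k))
    (𝓛 : (Fin (2 * d₁ + d₀) → ℝ) → ℝ)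
    (h𝓛 : ∀ w, 𝓛 w = Real.exp (∑ i, h i * (O.mulVec w i) ^ 2))
    (w : Fin (2 * d₁ + d₀) → ℝ) :
    ∑ j, (Λᵀ.mulVec w j) * deriv (fun s => 𝓛 (Function.update w j s)) (w j) = 0 := by
  obtain rfl : 𝓛 = fun w => Real.exp (∑ i, h i * (O *ᵥ w) i ^ 2) := funext h𝓛
  have hF := (hasFDerivAt_sum_mul_mulVec_sq h O w).exp
  rw [sum_mul_deriv_update_eq_fderiv hF.differentiableAt, hF.fderiv, hΛ]
  simp only [_root_.smul_apply, _root_.sum_apply, ContinuousLinearMap.comp_apply,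
    LinearMap.coe_toContinuousLinearMap', mulVecLin_apply, ContinuousLinearMap.proj_apply,
    smul_eq_mul, mulVec_transpose_conj_mulVec (mul_eq_one_comm.mp hO)]
  rw [sum_mul_mul_transpose_mulVec_eq_zero_of_commute_diagonal (canonicalSkew_transpose η)
    (commute_diagonal_canonicalSkew η (apply_eq_apply_of_div_two_eq hpair)), mul_zero, mul_zero]
end

section
/- Let d be a natural number, O a real orthogonal d×d matrix (Oᵀ * O = 1), h : Fin d → ℝ and g : ℝ. Define f : (Fin d → ℝ) → ℝ by f(w) = g · exp( ∑_{i} h i · ((O.mulVec w) i)² ). Then for every w : Fin d → ℝ, ∑_{j} ∂²f/∂wⱼ² (w) = f(w) · ( 4·∑_{i} (h i)² · ((O.mulVec w) i)² + 2·∑_{i} h i ), where ∂²f/∂wⱼ² (w) denotes the second derivative of the function s ↦ f(Function.update w j s) at s = w j. -/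
open Matrix Finset Real

/-!
Along the line `s ↦ Function.update w j s` the vector `O w` moves affinely in the direction of the
`j`-th column of `O`, so `f` restricted to it is `g · exp` of a quadratic polynomial `Q_j` and its
second derivative at `w j` is `f w · (Q_j'² + Q_j'')`. Summing over `j`, the columns of `O` enter
only through `∑ⱼ (∑ᵢ cᵢ O_{ij})² = ∑ᵢ cᵢ²` and `∑ⱼ O_{ij}² = 1`, both consequences of `O Oᵀ = 1`.
-/

section Orthogonal

variable {n R : Type*} [Fintype n] [DecidableEq n] [CommRing R] {O : Matrix n n R}

theorem Matrix.sum_sq_sum_mul_of_mul_transpose_eq_one (hO : O * Oᵀ = 1) (c : n → R) :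
    ∑ j, (∑ i, c i * O i j) ^ 2 = ∑ i, c i ^ 2 := by
  have key : (c ᵥ* O) ⬝ᵥ (c ᵥ* O) = c ⬝ᵥ c := by
    rw [← dotProduct_mulVec, ← vecMul_transpose, vecMul_vecMul, hO, vecMul_one]
  simpa only [dotProduct, vecMul, sq] using key

theorem Matrix.sum_sq_row_of_mul_transpose_eq_one (hO : O * Oᵀ = 1) (i : n) :
    ∑ j, O i j ^ 2 = 1 := by
  simpa [mul_apply, sq] using congrFun₂ hO i i

theorem Matrix.sum_sum_mul_sq_of_mul_transpose_eq_one (hO : O * Oᵀ = 1) (c : n → R) :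
    ∑ j, ∑ i, c i * O i j ^ 2 = ∑ i, c i := by
  rw [sum_comm]
  simp only [← mul_sum, sum_sq_row_of_mul_transpose_eq_one hO, mul_one]

end Orthogonal

theorem Matrix.mulVec_update_apply {m n R : Type*} [Fintype n] [DecidableEq n] [CommRing R]
    (M : Matrix m n R) (v : n → R) (j : n) (x : R) (i : m) :
    (M *ᵥ Function.update v j x) i = (M *ᵥ v) i + (x - v j) * M i j := by
  rw [Pi.update_eq_sub_add_single]
  simp only [mulVec_add, mulVec_sub, mulVec_single, Pi.add_apply, Pi.sub_apply, Pi.smul_apply,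
    col_apply, MulOpposite.smul_eq_mul_unop, MulOpposite.unop_op]
  ring

theorem deriv_deriv_const_mul_exp {φ φ' : ℝ → ℝ} {φ'' x : ℝ} (c : ℝ)
    (hφ : ∀ s, HasDerivAt φ (φ' s) s) (hφ' : HasDerivAt φ' φ'' x) :
    deriv (deriv fun s => c * exp (φ s)) x = c * exp (φ x) * (φ' x ^ 2 + φ'') := by
  have hfirst : deriv (fun s => c * exp (φ s)) = fun s => c * exp (φ s) * φ' s :=
    funext fun s => by simpa only [mul_assoc] using (((hφ s).exp).const_mul c).deriv
  rw [hfirst, (((hφ x).exp.const_mul c).fun_mul hφ').deriv]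
  ring

theorem hasDerivAt_affine (a b x₀ s : ℝ) : HasDerivAt (fun s => a + (s - x₀) * b) b s := by
  simpa using (((hasDerivAt_id s).sub_const x₀).mul_const b).const_add a

section AffineQuadratic

variable {ι : Type*} [Fintype ι] (h a b : ι → ℝ) (x₀ : ℝ)

theorem hasDerivAt_sum_mul_sq_affine (s : ℝ) :
    HasDerivAt (fun s => ∑ i, h i * (a i + (s - x₀) * b i) ^ 2)
      (∑ i, 2 * h i * (a i + (s - x₀) * b i) * b i) s := by
  refine HasDerivAt.fun_sum fun i _ => ?_
  refine (((hasDerivAt_affine (a i) (b i) x₀ s).fun_pow 2).const_mul (h i)).congr_deriv ?_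
  push_cast
  ring

theorem hasDerivAt_sum_mul_affine (s : ℝ) :
    HasDerivAt (fun s => ∑ i, 2 * h i * (a i + (s - x₀) * b i) * b i)
      (∑ i, 2 * h i * b i ^ 2) s := by
  refine HasDerivAt.fun_sum fun i _ => ?_
  exact (((hasDerivAt_affine (a i) (b i) x₀ s).const_mul (2 * h i)).mul_const (b i)).congr_deriv
    (by ring)

theorem deriv_deriv_const_mul_exp_sum_mul_sq_affine (c : ℝ) :
    deriv (deriv fun s => c * exp (∑ i, h i * (a i + (s - x₀) * b i) ^ 2)) x₀ =
      c * exp (∑ i, h i * a i ^ 2) *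
        ((∑ i, 2 * h i * a i * b i) ^ 2 + ∑ i, 2 * h i * b i ^ 2) := by
  rw [deriv_deriv_const_mul_exp c (hasDerivAt_sum_mul_sq_affine h a b x₀)
    (hasDerivAt_sum_mul_affine h a b x₀ x₀)]
  simp only [sub_self, zero_mul, add_zero]

end AffineQuadratic

/-- Laplacian of the exponential-quadratic ansatz: for `O` orthogonal and
`f(w) = g·exp(∑ᵢ hᵢ (Ow)ᵢ²)`, one has
`Δf(w) = f(w)·(4∑ᵢ hᵢ²(Ow)ᵢ² + 2∑ᵢ hᵢ)`. -/
theorem laplacian_exp_quadratic_ansatz (d : ℕ)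
    (O : Matrix (Fin d) (Fin d) ℝ) (hO : Oᵀ * O = 1)
    (h : Fin d → ℝ) (g : ℝ)
    (f : (Fin d → ℝ) → ℝ)
    (hf : ∀ w, f w = g * Real.exp (∑ i, h i * (O.mulVec w i) ^ 2))
    (w : Fin d → ℝ) :
    ∑ j, deriv (deriv (fun s => f (Function.update w j s))) (w j) =
      f w * (4 * ∑ i, (h i) ^ 2 * (O.mulVec w i) ^ 2 + 2 * ∑ i, h i) := by
  have hOOt : O * Oᵀ = 1 := mul_eq_one_comm.mp hO
  have hline : ∀ j, (fun s => f (Function.update w j s)) =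
      fun s => g * exp (∑ i, h i * ((O *ᵥ w) i + (s - w j) * O i j) ^ 2) :=
    fun j => funext fun s => by simp only [hf, mulVec_update_apply]
  simp only [hline, deriv_deriv_const_mul_exp_sum_mul_sq_affine, ← mul_sum, sum_add_distrib,
    sum_sq_sum_mul_of_mul_transpose_eq_one hOOt, sum_sum_mul_sq_of_mul_transpose_eq_one hOOt, hf w]
  congr 2
  rw [mul_sum]
  exact sum_congr rfl fun i _ => by ring
end
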